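/- arXiv:2301.00569 — 3 statements merged into one kernel-verified Lean document; each statement's English description precedes it below -/
import Mathlib

section
/- Let (R, m) be a one-dimensional Cohen-Macaulay local ring and I an m-primary ideal. Then type(I) ≥ type(R/I). -/
open CategoryTheory IsLocalRing

universe u

/-- The length of a module, as the Krull dimension of its submodule lattice. -/
noncomputable def rlength (R : Type u) (M : Type*) [Ring R] [AddCommGroup M]
    [Module R M] : WithBot ℕ∞ :=
  Order.krullDim (Submodule R M)

/-- `dim_k Ext^1_R(k, M)` (measured as `R`-length, which agrees with `k`-dimension
since the module is killed by the maximal ideal). -/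
noncomputable def modType (R : Type u) [CommRing R] [IsLocalRing R]
    (M : ModuleCat.{u} R) : WithBot ℕ∞ :=
  rlength R (((_root_.Ext R (ModuleCat.{u} R) 1).obj
    (Opposite.op (ModuleCat.of R (ResidueField R)))).obj M)

/-- The Cohen–Macaulay type of an `m`-primary ideal `I`:  `dim_k Ext^1_R(k, I)`. -/
noncomputable def idealType (R : Type u) [CommRing R] [IsLocalRing R] (I : Ideal R) :
    WithBot ℕ∞ :=
  modType R (ModuleCat.of R I)

/-- The Cohen–Macaulay type of `R/I`: `dim_k Hom_R(k, R/I)`. -/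
noncomputable def quotType (R : Type u) [CommRing R] [IsLocalRing R] (I : Ideal R) :
    WithBot ℕ∞ :=
  rlength R (ResidueField R →ₗ[R] R ⧸ I)

/-- An ideal is `m`-primary iff its radical is the maximal ideal. -/
def IsMPrimary (R : Type u) [CommRing R] [IsLocalRing R] (I : Ideal R) : Prop :=
  I.radical = maximalIdeal R

/-- `I` is Elias if `type(I) = type(R/I)`. -/
def EliasIdeal (R : Type u) [CommRing R] [IsLocalRing R] (I : Ideal R) : Prop :=
  idealType R I = quotType R I

/-- The minimal number of generators, as `dim_k I/mI`. -/
noncomputable def mu (R : Type u) [CommRing R] [IsLocalRing R] (I : Ideal R) :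
    WithBot ℕ∞ :=
  rlength R (I ⧸ (maximalIdeal R • ⊤ : Submodule R I))

/-- `R` has Hilbert–Samuel multiplicity `e`. -/
def HasMultiplicity (R : Type u) [CommRing R] [IsLocalRing R] (e : ℕ) : Prop :=
  ∃ N : ℕ, ∀ n ≥ N,
    rlength R (R ⧸ (maximalIdeal R) ^ (n + 1)) =
      rlength R (R ⧸ (maximalIdeal R) ^ n) + (e : WithBot ℕ∞)

/-! Since the maximal ideal contains a nonzerodivisor, `Hom_R(k, R) = 0`. In the long exact
`Ext_R(k, -)`-sequence of `0 → I → R → R/I → 0` the connecting map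
`Hom_R(k, R/I) → Ext¹_R(k, I)` is therefore injective, and length is monotone along injections. -/

section LinearYoneda

open Limits

variable (R : Type*) [Ring R] {C : Type*} [Category C] [Abelian C] [Linear R C]

noncomputable def ChainComplex.linearYonedaObjMap (K : ChainComplex C ℕ) {Y Y' : C}
    (f : Y ⟶ Y') : K.linearYonedaObj R Y ⟶ K.linearYonedaObj R Y' where
  f n := ((linearCoyoneda R C).obj (Opposite.op (K.X n))).map f
  comm' _ _ _ := by
    ext ρ
    exact (Category.assoc _ _ _).symm

lemma ChainComplex.linearYonedaObjMap_comp (K : ChainComplex C ℕ) {Y Y' Y'' : C}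
    (f : Y ⟶ Y') (g : Y' ⟶ Y'') :
    K.linearYonedaObjMap R f ≫ K.linearYonedaObjMap R g = K.linearYonedaObjMap R (f ≫ g) := by
  ext n ρ
  exact Category.assoc _ _ _

lemma ChainComplex.linearYonedaObjMap_zero (K : ChainComplex C ℕ) (Y Y' : C) :
    K.linearYonedaObjMap R (0 : Y ⟶ Y') = 0 := by
  ext n ρ
  exact comp_zero

namespace CategoryTheory

lemma ShortComplex.ShortExact.map_linearCoyoneda_of_projective {S : ShortComplex C}
    (hS : S.ShortExact) (Q : C) [Projective Q] :
    (S.map ((linearCoyoneda R C).obj (Opposite.op Q))).ShortExact := by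
  have := hS.mono_f
  have := hS.epi_g
  refine .mk' ?_ ?_ ?_
  · rw [ShortComplex.moduleCat_exact_iff]
    exact fun ρ hρ => ⟨hS.exact.lift ρ hρ, hS.exact.lift_f ρ hρ⟩
  · rw [ModuleCat.mono_iff_injective]
    exact fun _ _ h => (cancel_mono S.f).mp h
  · rw [ModuleCat.epi_iff_surjective]
    exact fun ρ => ⟨Projective.factorThru ρ S.g, Projective.factorThru_comp ρ S.g⟩

namespace ProjectiveResolution

variable {X : C} (P : ProjectiveResolution X)

lemma shortExact_linearYonedaObjMap {S : ShortComplex C} (hS : S.ShortExact) :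
    (ShortComplex.mk (P.complex.linearYonedaObjMap R S.f) (P.complex.linearYonedaObjMap R S.g)
      (by rw [ChainComplex.linearYonedaObjMap_comp, S.zero,
        ChainComplex.linearYonedaObjMap_zero])).ShortExact :=
  HomologicalComplex.shortExact_of_degreewise_shortExact _
    fun n => hS.map_linearCoyoneda_of_projective R (P.complex.X n)

lemma isZero_homology_zero_linearYonedaObj {Y : C} (hY : ∀ φ : X ⟶ Y, φ = 0) :
    IsZero ((P.complex.linearYonedaObj R Y).homology 0) := by
  rw [← HomologicalComplex.exactAt_iff_isZero_homology,
    HomologicalComplex.exactAt_iff' _ 0 0 1 (by simp) (by simp), ShortComplex.moduleCat_exact_iff]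
  intro φ hφ
  -- a `0`-cocycle `P₀ ⟶ Y` factors through `X = coker (P₁ ⟶ P₀)`
  obtain ⟨ψ, hψ⟩ := CokernelCofork.IsColimit.desc' P.isColimitCokernelCofork φ hφ
  refine ⟨0, (map_zero _).trans ?_⟩
  rw [← hψ, hY ψ]
  exact comp_zero.symm

noncomputable def homToCochainsZero (Y : C) :
    ModuleCat.of R (X ⟶ Y) ⟶ (P.complex.linearYonedaObj R Y).X 0 :=
  ModuleCat.ofHom (Linear.leftComp R Y (P.π.f 0))

instance mono_homToCochainsZero (Y : C) : Mono (P.homToCochainsZero R Y) :=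
  (ModuleCat.mono_iff_injective _).mpr fun _ _ h => (cancel_epi (P.π.f 0)).mp h

lemma homToCochainsZero_comp_d (Y : C) :
    P.homToCochainsZero R Y ≫ (P.complex.linearYonedaObj R Y).d 0 1 = 0 := by
  ext φ
  exact (P.complex_d_comp_π_f_zero_assoc φ).trans zero_comp

noncomputable def homToHomologyZero (Y : C) :
    ModuleCat.of R (X ⟶ Y) ⟶ (P.complex.linearYonedaObj R Y).homology 0 :=
  (P.complex.linearYonedaObj R Y).liftCycles _ 1 (by simp) (P.homToCochainsZero_comp_d R Y) ≫
    (P.complex.linearYonedaObj R Y).homologyπ 0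

instance mono_homToHomologyZero (Y : C) : Mono (P.homToHomologyZero R Y) :=
  have := mono_of_mono_fac ((P.complex.linearYonedaObj R Y).liftCycles_i _ 1 _
    (P.homToCochainsZero_comp_d R Y))
  mono_comp _ _

end ProjectiveResolution

theorem ShortComplex.ShortExact.exists_mono_hom_to_ext_one [EnoughProjectives C]
    {S : ShortComplex C} (hS : S.ShortExact) {X : C} (hX : ∀ φ : X ⟶ S.X₂, φ = 0) :
    ∃ m : ModuleCat.of R (X ⟶ S.X₃) ⟶ ((Ext R C 1).obj (Opposite.op X)).obj S.X₁, Mono m := by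
  let P := projectiveResolution X
  have hT := P.shortExact_linearYonedaObjMap R hS
  have : Mono (hT.δ 0 1 rfl) := (hT.homology_exact₃ 0 1 rfl).mono_g
    ((P.isZero_homology_zero_linearYonedaObj R hX).eq_of_src _ _)
  exact ⟨P.homToHomologyZero R S.X₃ ≫ hT.δ 0 1 rfl ≫ (P.isoExt 1 S.X₁).inv, inferInstance⟩

end CategoryTheory

end LinearYoneda

lemma rlength_le_of_injective (R : Type*) [Ring R] {M N : Type*} [AddCommGroup M]
    [AddCommGroup N] [Module R M] [Module R N] {f : M →ₗ[R] N} (hf : Function.Injective f) :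
    rlength R M ≤ rlength R N :=
  Order.krullDim_le_of_strictMono _ (Submodule.map_strictMono_of_injective hf)

lemma Submodule.shortExact_subtype_mkQ {R M : Type*} [Ring R] [AddCommGroup M] [Module R M]
    (N : Submodule R M) :
    (ModuleCat.shortComplexOfCompEqZero N.subtype N.mkQ
      (LinearMap.exact_subtype_mkQ N).linearMap_comp_eq_zero).ShortExact :=
  ModuleCat.shortComplex_shortExact _ (LinearMap.exact_subtype_mkQ N) N.injective_subtype
    N.mkQ_surjective

lemma IsLocalRing.hom_residueField_eq_zero_of_mem_nonZeroDivisors {R : Type u} [CommRing R]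
    [IsLocalRing R] {x : R} (hxm : x ∈ maximalIdeal R) (hx : x ∈ nonZeroDivisors R)
    (φ : ModuleCat.of R (ResidueField R) ⟶ ModuleCat.of R R) : φ = 0 := by
  have hann : x ∈ Module.annihilator R (ResidueField R) :=
    Module.mem_annihilator.mpr fun y => by
      rw [Algebra.smul_def, ResidueField.algebraMap_eq, (residue_eq_zero_iff x).mpr hxm, zero_mul]
  have := (Module.Flat.isSMulRegular_of_nonZeroDivisors (M := R) hx)
    |>.linearMap_subsingleton_of_mem_annihilator hann
  exact ModuleCat.hom_ext (Subsingleton.elim _ _)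

theorem type_ge_type_quot_general (R : Type u) [CommRing R] [IsLocalRing R]
    (hCM : ∃ x ∈ maximalIdeal R, x ∈ nonZeroDivisors R)
    (I : Ideal R) :
    quotType R I ≤ idealType R I := by
  obtain ⟨x, hxm, hx⟩ := hCM
  obtain ⟨m, hm⟩ := I.shortExact_subtype_mkQ.exists_mono_hom_to_ext_one R
    (hom_residueField_eq_zero_of_mem_nonZeroDivisors hxm hx)
  let e := ModuleCat.homLinearEquiv (M := ModuleCat.of R (ResidueField R))
    (N := ModuleCat.of R (R ⧸ I)) (S := R)
  refine rlength_le_of_injective R (f := m.hom ∘ₗ e.symm.toLinearMap) ?_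
  rw [LinearMap.coe_comp, LinearEquiv.coe_coe]
  exact ((ModuleCat.mono_iff_injective m).mp hm).comp e.symm.injective

theorem type_ge_type_quot (R : Type u) [CommRing R] [IsLocalRing R] [IsNoetherianRing R]
    (hdim : ringKrullDim R = 1)
    (hCM : ∃ x ∈ maximalIdeal R, x ∈ nonZeroDivisors R)
    (I : Ideal R) (hI : IsMPrimary R I) :
    quotType R I ≤ idealType R I :=
  type_ge_type_quot_general R hCM I
end

section
/- Let (R, m) be a one-dimensional Cohen-Macaulay local ring, I an m-primary ideal, and x ∈ m a non-zerodivisor. Then xI : m ⊆ (x) if and only if xI : m = x(I : m). -/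
open CategoryTheory IsLocalRing

universe u

namespace Ideal

variable {R : Type*} [CommRing R]

theorem mul_colon_le (J I : Ideal R) (S : Set R) : J * I.colon S ≤ (J * I).colon S :=
  mul_le.mpr fun j hj r hr => Submodule.mem_colon.mpr fun s hs => by
    rw [smul_eq_mul, mul_assoc]
    exact mul_mem_mul hj (Submodule.mem_colon.mp hr s hs)

theorem span_singleton_mul_colon_eq_colon_inf {x : R} (hx : x ∈ nonZeroDivisors R)
    (I : Ideal R) (S : Set R) :
    span {x} * I.colon S = (span {x} * I).colon S ⊓ span {x} := by
  refine le_antisymm (le_inf (mul_colon_le _ _ _) mul_le_left) ?_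
  rintro r ⟨hr, hrx⟩
  obtain ⟨s, rfl⟩ := mem_span_singleton'.mp hrx
  refine mem_span_singleton_mul.mpr ⟨s, Submodule.mem_colon.mpr fun p hp => ?_, mul_comm x s⟩
  obtain ⟨b, hb, hxb⟩ := mem_span_singleton_mul.mp (Submodule.mem_colon.mp hr p hp)
  have hbsp : b = s * p :=
    (mul_cancel_left_mem_nonZeroDivisors hx).mp (by rw [hxb, smul_eq_mul]; ring)
  rwa [smul_eq_mul, ← hbsp]

end Ideal

theorem colon_le_span_iff_eq_general (R : Type u) [CommRing R] [IsLocalRing R]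
    (I : Ideal R)
    (x : R) (hx : x ∈ nonZeroDivisors R) :
    (Ideal.span {x} * I).colon (maximalIdeal R) ≤ Ideal.span {x} ↔
      (Ideal.span {x} * I).colon (maximalIdeal R) =
        Ideal.span {x} * (I.colon (maximalIdeal R)) := by
  rw [Ideal.span_singleton_mul_colon_eq_colon_inf hx]
  exact left_eq_inf.symm

theorem colon_le_span_iff_eq (R : Type u) [CommRing R] [IsLocalRing R] [IsNoetherianRing R]
    (hdim : ringKrullDim R = 1)
    (hCM : ∃ x ∈ maximalIdeal R, x ∈ nonZeroDivisors R)
    (I : Ideal R) (hI : IsMPrimary R I)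
    (x : R) (hxm : x ∈ maximalIdeal R) (hx : x ∈ nonZeroDivisors R) :
    (Ideal.span {x} * I).colon (maximalIdeal R) ≤ Ideal.span {x} ↔
      (Ideal.span {x} * I).colon (maximalIdeal R) =
        Ideal.span {x} * (I.colon (maximalIdeal R)) :=
  colon_le_span_iff_eq_general R I x hx
end

section
/- Let (R, m) be a one-dimensional Cohen-Macaulay local ring and I an m-primary ideal. If I is isomorphic to R as an R-module, then I is Elias. -/
open CategoryTheory IsLocalRing

universe u

/-!
If `I ≅ R`, then `I = cR` for a nonzerodivisor `c ∈ m`, so `Ext¹(k, I) ≅ Ext¹(k, R)`. In the long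
exact `Ext(k, -)` sequence of `0 → R --c--> R → R/cR → 0`, the term `Hom(k, R)` vanishes because
`c` is regular, and `c : Ext¹(k, R) → Ext¹(k, R)` is zero because `c` kills `k`; hence the
connecting map `Hom(k, R/I) → Ext¹(k, R)` is an isomorphism. The sequence is computed from the
Hom complexes of a projective resolution `P` of `k`, on which `c • 𝟙` is null-homotopic.
-/

open Limits Opposite

lemma rlength_congr {R : Type u} [Ring R] {M N : Type*} [AddCommGroup M] [Module R M]
    [AddCommGroup N] [Module R N] (e : M ≃ₗ[R] N) : rlength R M = rlength R N :=
  Order.krullDim_eq_of_orderIso (Submodule.orderIsoMapComap e)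

section LinearYoneda

variable (R : Type*) [Ring R] {C : Type*} [Category C] [Abelian C] [Linear R C]

noncomputable def ChainComplex.linearYonedaMap (K : ChainComplex C ℕ) {Y Z : C} (g : Y ⟶ Z) :
    K.linearYonedaObj R Y ⟶ K.linearYonedaObj R Z where
  f i := ModuleCat.ofHom (Linear.rightComp R (K.X i) g)
  comm' i j _ := by
    ext (φ : K.X i ⟶ Y)
    exact (Category.assoc (K.d j i) φ g).symm

noncomputable def ChainComplex.linearYonedaShortComplex (K : ChainComplex C ℕ)
    (S : ShortComplex C) : ShortComplex (CochainComplex (ModuleCat R) ℕ) :=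
  ShortComplex.mk (K.linearYonedaMap R S.f) (K.linearYonedaMap R S.g) (by
    ext i (φ : K.X i ⟶ S.X₁)
    change (φ ≫ S.f) ≫ S.g = 0
    simp)

lemma ChainComplex.shortExact_linearYonedaShortComplex (K : ChainComplex C ℕ)
    [∀ i, Projective (K.X i)] {S : ShortComplex C} (hS : S.ShortExact) :
    (K.linearYonedaShortComplex R S).ShortExact := by
  refine HomologicalComplex.shortExact_of_degreewise_shortExact _ fun i => ?_
  have := hS.mono_f
  refine { exact := ?_, mono_f := ?_, epi_g := ?_ }
  · rw [ShortComplex.moduleCat_exact_iff]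
    intro ψ hψ
    change K.X i ⟶ S.X₂ at ψ
    exact ⟨hS.exact.lift ψ hψ, hS.exact.lift_f ψ hψ⟩
  · rw [ModuleCat.mono_iff_injective]
    intro φ φ' h
    change K.X i ⟶ S.X₁ at φ φ'
    exact (cancel_mono S.f).1 h
  · have := hS.epi_g
    rw [ModuleCat.epi_iff_surjective]
    intro ψ
    change K.X i ⟶ S.X₃ at ψ
    exact ⟨Projective.factorThru ψ S.g, Projective.factorThru_comp _ _⟩

end LinearYoneda

lemma CategoryTheory.ShortComplex.ShortExact.isIso_δ_zero_one {D : Type*} [Category D]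
    [Abelian D] {S : ShortComplex (CochainComplex D ℕ)} (hS : S.ShortExact)
    (h₀ : IsZero (S.X₂.homology 0)) (h₁ : HomologicalComplex.homologyMap S.f 1 = 0) :
    IsIso (hS.δ 0 1 rfl) := by
  have : Mono (hS.δ 0 1 rfl) := (hS.homology_exact₃ 0 1 rfl).mono_g (h₀.eq_of_src _ _)
  have : Epi (hS.δ 0 1 rfl) := (hS.homology_exact₁ 0 1 rfl).epi_f h₁
  exact isIso_of_mono_of_epi _

section ExtZero

variable {R : Type*} [Ring R] {C : Type*} [Category C] [Abelian C] [Linear R C]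
  [EnoughProjectives C]

instance preservesLimits_linearYoneda_obj (Y : C) : PreservesLimits ((linearYoneda R C).obj Y) :=
  have : PreservesLimits ((linearYoneda R C).obj Y ⋙ forget (ModuleCat R)) :=
    preservesLimits_of_natIso (NatIso.ofComponents (fun X => Iso.refl _) : yoneda.obj Y ≅ _)
  preservesLimits_of_reflects_of_preserves _ (forget (ModuleCat R))

noncomputable def extZeroIso (X Y : C) :
    ((Ext R C 0).obj (op X)).obj Y ≅ ModuleCat.of R (X ⟶ Y) :=
  have := preservesFiniteColimits_rightOp ((linearYoneda R C).obj Y)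
  ((((linearYoneda R C).obj Y).rightOp.leftDerivedZeroIsoSelf.app X).unop).symm

end ExtZero

namespace CategoryTheory.ProjectiveResolution

variable {R : Type*} [Ring R] {C : Type*} [Category C] [Abelian C] [Linear R C] {X : C}
  (P : ProjectiveResolution X)

lemma exists_d_comp_eq_smul {c : R} (hc : c • 𝟙 X = 0) {Y : C}
    (χ : P.complex.X 1 ⟶ Y) (hχ : P.complex.d 2 1 ≫ χ = 0) :
    ∃ θ : P.complex.X 0 ⟶ Y, P.complex.d 1 0 ≫ θ = c • χ := by
  have hπ : (c • 𝟙 P.complex) ≫ P.π = 0 := by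
    ext
    simp only [HomologicalComplex.smul_f_apply, HomologicalComplex.zero_f, Linear.smul_comp,
      Category.id_comp]
    rw [← Category.comp_id (P.π.f 0), ← Linear.comp_smul]
    exact (P.π.f 0 ≫= hc).trans comp_zero
  -- degree 1 of a null-homotopy of `c • 𝟙 P`: `c • 𝟙 = d₁₀ ≫ h₀₁ + h₁₂ ≫ d₂₁`
  have h := (liftHomotopyZero _ hπ).comm 1
  rw [Homotopy.dNext_succ_chainComplex, Homotopy.prevD_chainComplex] at h
  simp only [HomologicalComplex.smul_f_apply, HomologicalComplex.id_f, Nat.reduceAdd,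
    HomologicalComplex.zero_f, add_zero] at h
  refine ⟨(liftHomotopyZero _ hπ).hom 0 1 ≫ χ, ?_⟩
  simpa [hχ] using (congrArg (· ≫ χ) h).symm

lemma homologyMap_linearYonedaMap_smul_id_eq_zero {c : R} (hc : c • 𝟙 X = 0) (Y : C) :
    HomologicalComplex.homologyMap (P.complex.linearYonedaMap R (c • 𝟙 Y)) 1 = 0 := by
  set K := P.complex.linearYonedaObj R Y
  rw [← cancel_epi (K.homologyπ 1), comp_zero, HomologicalComplex.homologyπ_naturality]
  ext z
  obtain ⟨χ, hχ⟩ : ∃ χ : P.complex.X 1 ⟶ Y, χ = K.iCycles 1 z := ⟨_, rfl⟩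
  obtain ⟨θ, hθ⟩ := P.exists_d_comp_eq_smul hc χ
    (hχ ▸ ConcreteCategory.congr_hom (K.iCycles_d 1 2) z)
  have hz : HomologicalComplex.cyclesMap (P.complex.linearYonedaMap R (c • 𝟙 Y)) 1 z =
      K.toCycles 0 1 θ := by
    apply (ModuleCat.mono_iff_injective (K.iCycles 1)).1 inferInstance
    refine (ConcreteCategory.congr_hom (HomologicalComplex.cyclesMap_i _ 1) z).trans
      (Eq.trans ?_ (ConcreteCategory.congr_hom (K.toCycles_i 0 1) θ).symm)
    change K.iCycles 1 z ≫ (c • 𝟙 Y) = P.complex.d 1 0 ≫ θ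
    rw [hθ, ← hχ, Linear.comp_smul, Category.comp_id]
  rw [ModuleCat.hom_comp, LinearMap.comp_apply, hz]
  exact ConcreteCategory.congr_hom (K.toCycles_comp_homologyπ 0 1) θ

end CategoryTheory.ProjectiveResolution

section IsLocalRing

variable {R : Type u} [CommRing R] [IsLocalRing R]

lemma IsLocalRing.smul_residueField_eq_zero {c : R} (hc : c ∈ maximalIdeal R)
    (y : ResidueField R) : c • y = 0 := by
  rw [Algebra.smul_def, IsLocalRing.ResidueField.algebraMap_eq, (residue_eq_zero_iff c).2 hc,
    zero_mul]

lemma IsSMulRegular.subsingleton_linearMap_residueField {M : Type*} [AddCommGroup M] [Module R M]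
    {c : R} (hc : c ∈ maximalIdeal R) (hreg : IsSMulRegular M c) :
    Subsingleton (ResidueField R →ₗ[R] M) := by
  refine subsingleton_of_forall_eq 0 fun f => LinearMap.ext fun y => hreg ?_
  dsimp only
  rw [← map_smul, smul_residueField_eq_zero hc, map_zero, LinearMap.zero_apply, smul_zero]

noncomputable def extOneResidueFieldIso {M : ModuleCat.{u} R} {c : R}
    (hc : c ∈ maximalIdeal R) (hreg : IsSMulRegular M c) :
    ((Ext R (ModuleCat.{u} R) 1).obj (op (ModuleCat.of R (ResidueField R)))).obj M ≅
      ModuleCat.of R (ModuleCat.of R (ResidueField R) ⟶ ModuleCat.of R (QuotSMulTop c M)) :=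
  let P := projectiveResolution (ModuleCat.of R (ResidueField R))
  have hS := P.complex.shortExact_linearYonedaShortComplex R hreg.smulShortComplex_shortExact
  have hk : c • 𝟙 (ModuleCat.of R (ResidueField R)) = 0 := by
    ext y
    exact smul_residueField_eq_zero hc y
  have : Subsingleton (ModuleCat.of R (ResidueField R) ⟶ M) :=
    (ModuleCat.homLinearEquiv (S := R)).toEquiv.subsingleton_congr.2
      (hreg.subsingleton_linearMap_residueField hc)
  have : IsIso (hS.δ 0 1 rfl) := hS.isIso_δ_zero_one
    ((ModuleCat.isZero_of_subsingleton _).of_iso ((P.isoExt 0 M).symm ≪≫ extZeroIso _ _))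
    (P.homologyMap_linearYonedaMap_smul_id_eq_zero hk M)
  P.isoExt 1 M ≪≫ (asIso (hS.δ 0 1 rfl)).symm ≪≫ (P.isoExt 0 _).symm ≪≫ extZeroIso _ _

end IsLocalRing

section Ideal

variable {R : Type*} [CommRing R] {I : Ideal R}

lemma Ideal.coe_linearEquiv_symm_apply (e : I ≃ₗ[R] R) (a : R) :
    (e.symm a : R) = a * e.symm 1 := by
  simpa using congrArg Subtype.val (e.symm.map_smul a 1)

open scoped Pointwise in
lemma Ideal.eq_smul_top_of_linearEquiv (e : I ≃ₗ[R] R) :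
    I = (e.symm 1 : R) • (⊤ : Submodule R R) := by
  ext x
  rw [Submodule.mem_smul_pointwise_iff_exists]
  constructor
  · intro hx
    refine ⟨e ⟨x, hx⟩, Submodule.mem_top, ?_⟩
    rw [smul_eq_mul, mul_comm, ← coe_linearEquiv_symm_apply, e.symm_apply_apply]
  · rintro ⟨y, -, rfl⟩
    rw [smul_eq_mul, mul_comm, ← coe_linearEquiv_symm_apply]
    exact (e.symm y).2

lemma Ideal.isSMulRegular_of_linearEquiv (e : I ≃ₗ[R] R) : IsSMulRegular R (e.symm 1 : R) :=
  fun a b hab => e.symm.injective <| Subtype.ext <| by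
    rw [coe_linearEquiv_symm_apply e a, coe_linearEquiv_symm_apply e b, mul_comm a, mul_comm b]
    exact hab

end Ideal

theorem elias_of_iso_self_general (R : Type u) [CommRing R] [IsLocalRing R]
    (I : Ideal R) (hI : IsMPrimary R I) (h : Nonempty (I ≃ₗ[R] R)) :
    EliasIdeal R I := by
  obtain ⟨e⟩ := h
  have hc : (e.symm 1 : R) ∈ maximalIdeal R := hI ▸ Ideal.le_radical (e.symm 1).2
  have hI_eq := Ideal.eq_smul_top_of_linearEquiv e
  calc idealType R I
      = rlength R (((Ext R (ModuleCat.{u} R) 1).obj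
          (op (ModuleCat.of R (ResidueField R)))).obj (ModuleCat.of R R)) :=
        rlength_congr (((Ext R _ 1).obj _).mapIso e.toModuleIso).toLinearEquiv
    _ = rlength R (ModuleCat.of R (ResidueField R) ⟶
          ModuleCat.of R (QuotSMulTop (e.symm 1 : R) (ModuleCat.of R R))) :=
        rlength_congr
          (extOneResidueFieldIso hc (Ideal.isSMulRegular_of_linearEquiv e)).toLinearEquiv
    _ = quotType R I :=
        rlength_congr (ModuleCat.homLinearEquiv.trans
          (LinearEquiv.congrRight (Submodule.quotEquivOfEq _ _ hI_eq.symm)))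

theorem elias_of_iso_self (R : Type u) [CommRing R] [IsLocalRing R] [IsNoetherianRing R]
    (hdim : ringKrullDim R = 1)
    (hCM : ∃ x ∈ maximalIdeal R, x ∈ nonZeroDivisors R)
    (I : Ideal R) (hI : IsMPrimary R I) (h : Nonempty (I ≃ₗ[R] R)) :
    EliasIdeal R I :=
  elias_of_iso_self_general R I hI h
end
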